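/- The group Sym(ℤ,ℕ), equipped with its permutation-group topology on Comm(ℕ), is a Polish group; more precisely, the image of Sym(ℤ,ℕ) under its faithful action on Comm(ℕ) is a closed subgroup of the Polish group of all permutations of the countable set Comm(ℕ) with the pointwise-convergence topology. -/

import Mathlib

/- # Preliminaries: the commensurating group `Sym(ℤ,ℕ)` and its Polish topology. -/

open Filter Set

namespace CfgPaper

/-- `ℕ` viewed inside `ℤ`. -/
def NN : Set ℤ := {n : ℤ | 0 ≤ n}

/-- The commensurating group of `ℤ`: permutations `σ` of `ℤ` with `σ(ℕ) ∆ ℕ` finite. -/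
def SymZN : Subgroup (Equiv.Perm ℤ) where
  carrier := {σ | (symmDiff (⇑σ '' NN) NN).Finite}
  one_mem' := by
    simp only [Set.mem_setOf_eq, Equiv.Perm.coe_one, Set.image_id, symmDiff_self]
    exact Set.finite_empty
  mul_mem' := by
    intro a b ha hb
    simp only [Set.mem_setOf_eq] at *
    have himage : ⇑(a * b) '' NN = ⇑a '' (⇑b '' NN) := by
      rw [Equiv.Perm.coe_mul, Set.image_comp]
    rw [himage]
    have htri : symmDiff (⇑a '' (⇑b '' NN)) NN ⊆
        symmDiff (⇑a '' (⇑b '' NN)) (⇑a '' NN) ∪ symmDiff (⇑a '' NN) NN :=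
      symmDiff_triangle _ _ _
    have heq : symmDiff (⇑a '' (⇑b '' NN)) (⇑a '' NN) = ⇑a '' symmDiff (⇑b '' NN) NN :=
      (Set.image_symmDiff a.injective _ _).symm
    refine Set.Finite.subset (Set.Finite.union ?_ ha) htri
    rw [heq]
    exact hb.image _
  inv_mem' := by
    intro a ha
    simp only [Set.mem_setOf_eq] at *
    have hinj : Set.InjOn ⇑a (symmDiff (⇑a⁻¹ '' NN) NN) := a.injective.injOn
    refine Set.Finite.of_finite_image ?_ hinj
    have himg : ⇑a '' symmDiff (⇑a⁻¹ '' NN) NN = symmDiff (⇑a '' (⇑a⁻¹ '' NN)) (⇑a '' NN) :=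
      Set.image_symmDiff a.injective _ _
    have hroundtrip : ⇑a '' (⇑a⁻¹ '' NN) = NN := by
      rw [Set.image_image]
      exact (congrArg (· '' NN) (funext fun x => Equiv.apply_symm_apply a x)).trans (Set.image_id NN)
    rw [himg, hroundtrip, symmDiff_comm]
    exact ha

lemma mem_SymZN {σ : Equiv.Perm ℤ} : σ ∈ SymZN ↔ (symmDiff (⇑σ '' NN) NN).Finite := Iff.rfl

/-- The countable set `Comm(ℕ)` of subsets of `ℤ` commensurated to `ℕ`. -/
def CommNT : Type := {A : Set ℤ // (symmDiff A NN).Finite}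

lemma image_commensurated {σ : Equiv.Perm ℤ} (hσ : σ ∈ SymZN) {A : Set ℤ}
    (hA : (symmDiff A NN).Finite) : (symmDiff (⇑σ '' A) NN).Finite := by
  have htri : symmDiff (⇑σ '' A) NN ⊆
      symmDiff (⇑σ '' A) (⇑σ '' NN) ∪ symmDiff (⇑σ '' NN) NN := symmDiff_triangle _ _ _
  have heq : symmDiff (⇑σ '' A) (⇑σ '' NN) = ⇑σ '' symmDiff A NN :=
    (Set.image_symmDiff σ.injective _ _).symm
  refine Set.Finite.subset (Set.Finite.union ?_ hσ) htri
  rw [heq]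
  exact hA.image _

/-- The faithful action of `Sym(ℤ,ℕ)` on `Comm(ℕ)` by permutations. -/
def symZNPerm (σ : SymZN) : Equiv.Perm CommNT where
  toFun A := ⟨⇑(σ : Equiv.Perm ℤ) '' A.1, image_commensurated σ.2 A.2⟩
  invFun A := ⟨⇑((σ : Equiv.Perm ℤ)⁻¹) '' A.1, image_commensurated (σ⁻¹ : SymZN).2 A.2⟩
  left_inv A := by
    apply Subtype.ext
    show ⇑((σ : Equiv.Perm ℤ)⁻¹) '' (⇑(σ : Equiv.Perm ℤ) '' A.1) = A.1
    rw [Set.image_image]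
    exact (congrArg (· '' A.1) (funext fun x => Equiv.symm_apply_apply (σ : Equiv.Perm ℤ) x)).trans
      (Set.image_id A.1)
  right_inv A := by
    apply Subtype.ext
    show ⇑(σ : Equiv.Perm ℤ) '' (⇑((σ : Equiv.Perm ℤ)⁻¹) '' A.1) = A.1
    rw [Set.image_image]
    exact (congrArg (· '' A.1) (funext fun x => Equiv.apply_symm_apply (σ : Equiv.Perm ℤ) x)).trans
      (Set.image_id A.1)

/-- The discrete topology on `Comm(ℕ)`. -/
def commNTTop : TopologicalSpace CommNT := ⊥

/-- The topology of pointwise convergence on the permutation group of the countable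
set `Comm(ℕ)` (together with pointwise convergence of inverses). -/
def permCommTop : TopologicalSpace (Equiv.Perm CommNT) :=
  TopologicalSpace.induced (fun π => (⇑π, ⇑π.symm))
    (@instTopologicalSpaceProd _ _
      (@Pi.topologicalSpace _ _ (fun _ => commNTTop))
      (@Pi.topologicalSpace _ _ (fun _ => commNTTop)))

/-- The Polish group topology on `Sym(ℤ,ℕ)`: the one induced by its faithful action
on `Comm(ℕ)`. -/
def symZNTop : TopologicalSpace SymZN :=
  TopologicalSpace.induced symZNPerm permCommTop

/- ## Auxiliary material -/

section Aux

/-- `Comm(ℕ)` is countable. -/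
instance : Countable CommNT := by
  have h : Set.Countable {s : Set ℤ | s.Finite} := by
    have h0 := Set.countable_setOf_finite_subset (Set.countable_univ (α := ℤ))
    have hsub : {s : Set ℤ | s.Finite} ⊆ {t : Set ℤ | t.Finite ∧ t ⊆ Set.univ} :=
      fun s hs => ⟨hs, Set.subset_univ s⟩
    exact Set.Countable.mono hsub h0
  haveI := h.to_subtype
  have hinj : Function.Injective (fun A : CommNT =>
      show {s : Set ℤ // s.Finite} from ⟨symmDiff A.1 NN, A.2⟩) := by
    intro A B hAB
    have h1 : symmDiff A.1 NN = symmDiff B.1 NN := congrArg Subtype.val hAB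
    exact Subtype.ext (symmDiff_left_injective NN h1)
  haveI : Countable {s : Set ℤ // s.Finite} := h.to_subtype
  exact hinj.countable

instance : TopologicalSpace CommNT := commNTTop
instance : DiscreteTopology CommNT := ⟨rfl⟩
instance : TopologicalSpace (Equiv.Perm CommNT) := permCommTop
instance : TopologicalSpace SymZN := symZNTop

lemma union_comm_aux {A B : Set ℤ} (hA : (symmDiff A NN).Finite)
    (hB : (symmDiff B NN).Finite) : (symmDiff (A ∪ B) NN).Finite := by
  refine (hA.union hB).subset ?_
  intro x hx
  simp only [Set.mem_symmDiff, Set.mem_union] at *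
  tauto

lemma inter_comm_aux {A B : Set ℤ} (hA : (symmDiff A NN).Finite)
    (hB : (symmDiff B NN).Finite) : (symmDiff (A ∩ B) NN).Finite := by
  refine (hA.union hB).subset ?_
  intro x hx
  simp only [Set.mem_symmDiff, Set.mem_union, Set.mem_inter_iff] at *
  tauto

/-- Union in `Comm(ℕ)`. -/
def cupC (A B : CommNT) : CommNT := ⟨A.1 ∪ B.1, union_comm_aux A.2 B.2⟩

/-- Intersection in `Comm(ℕ)`. -/
def capC (A B : CommNT) : CommNT := ⟨A.1 ∩ B.1, inter_comm_aux A.2 B.2⟩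

lemma comm_of_subset_finite {A F : Set ℤ} (hF : F.Finite) (h : symmDiff A NN ⊆ F) :
    (symmDiff A NN).Finite := hF.subset h

/-- `ℕ ∪ {z}` as an element of `Comm(ℕ)`. -/
def nnU (z : ℤ) : CommNT :=
  ⟨NN ∪ {z}, by
    refine comm_of_subset_finite (Set.finite_singleton z) ?_
    intro x hx
    simp only [Set.mem_symmDiff, Set.mem_union, Set.mem_singleton_iff] at hx ⊢
    tauto⟩

/-- `ℕ \ {z}` as an element of `Comm(ℕ)`. -/
def nnD (z : ℤ) : CommNT :=
  ⟨NN \ {z}, by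
    refine comm_of_subset_finite (Set.finite_singleton z) ?_
    intro x hx
    simp only [Set.mem_symmDiff, Set.mem_diff, Set.mem_singleton_iff] at hx ⊢
    tauto⟩

/-- `ℕ` as an element of `Comm(ℕ)`. -/
def nnI : CommNT := ⟨NN, by simp only [symmDiff_self]; exact Set.finite_empty⟩

/-- `(ℕ ∪ {a}) \ {b}` as an element of `Comm(ℕ)`, separating `a` from `b`. -/
def sepC (a b : ℤ) : CommNT :=
  ⟨(NN ∪ {a}) \ {b}, by
    refine comm_of_subset_finite ((Set.finite_singleton a).union (Set.finite_singleton b)) ?_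
    intro x hx
    simp only [Set.mem_symmDiff, Set.mem_diff, Set.mem_union, Set.mem_singleton_iff] at hx ⊢
    tauto⟩

lemma eq_of_forall_memC {a b : ℤ} (h : ∀ B : CommNT, a ∈ B.1 ↔ b ∈ B.1) : a = b := by
  by_contra hab
  have ha : a ∈ (sepC a b).1 := ⟨Or.inr rfl, hab⟩
  have hb : b ∈ (sepC a b).1 := (h _).1 ha
  exact hb.2 rfl

lemma cover_mem_iff {M S : Set ℤ} {w : ℤ} (hw : w ∉ M) :
    (S ∩ (M ∪ {w})) ∪ M = M ∪ {w} ↔ w ∈ S := by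
  constructor
  · intro h
    have hwmem : w ∈ (S ∩ (M ∪ {w})) ∪ M := by
      rw [h]; exact Or.inr rfl
    rcases hwmem with h1 | h1
    · exact h1.1
    · exact absurd h1 hw
  · intro hS
    apply Set.Subset.antisymm
    · rintro x (hx | hx)
      · exact hx.2
      · exact Or.inl hx
    · rintro x (hx | hx)
      · exact Or.inr hx
      · exact Or.inl ⟨hx ▸ hS, Or.inr hx⟩

section PermTop

/-- The defining map of the pointwise topology on permutations. -/
def iotaP (π : Equiv.Perm CommNT) : (CommNT → CommNT) × (CommNT → CommNT) := (⇑π, ⇑π.symm)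

lemma continuous_iotaP : Continuous iotaP := continuous_induced_dom

lemma continuous_coePerm : Continuous (fun π : Equiv.Perm CommNT => (⇑π : CommNT → CommNT)) :=
  continuous_fst.comp continuous_iotaP

lemma continuous_symmPerm :
    Continuous (fun π : Equiv.Perm CommNT => (⇑π.symm : CommNT → CommNT)) :=
  continuous_snd.comp continuous_iotaP

lemma cont_eval_comp (A : CommNT) :
    Continuous (fun p : (CommNT → CommNT) × (CommNT → CommNT) => p.2 (p.1 A)) := by
  rw [continuous_discrete_rng]
  intro B
  have hset : (fun p : (CommNT → CommNT) × (CommNT → CommNT) => p.2 (p.1 A)) ⁻¹' {B}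
      = ⋃ C : CommNT, (((fun f : CommNT → CommNT => f A) ⁻¹' {C}) ×ˢ
        ((fun g : CommNT → CommNT => g C) ⁻¹' {B})) := by
    ext p
    simp only [Set.mem_preimage, Set.mem_singleton_iff, Set.mem_iUnion, Set.mem_prod]
    constructor
    · intro h; exact ⟨p.1 A, rfl, h⟩
    · rintro ⟨C, h1, h2⟩; rw [h1]; exact h2
  rw [hset]
  refine isOpen_iUnion fun C => IsOpen.prod ?_ ?_
  · exact IsOpen.preimage (continuous_apply A) (isOpen_discrete ({C} : Set CommNT))
  · exact IsOpen.preimage (continuous_apply C) (isOpen_discrete ({B} : Set CommNT))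

lemma isClosedEmbedding_iotaP : Topology.IsClosedEmbedding iotaP := by
  refine ⟨⟨⟨rfl⟩, fun π ρ h => ?_⟩, ?_⟩
  · exact Equiv.coe_fn_injective (congrArg Prod.fst h)
  · have hr : Set.range iotaP = {p : (CommNT → CommNT) × (CommNT → CommNT) |
        (∀ A, p.2 (p.1 A) = A) ∧ (∀ A, p.1 (p.2 A) = A)} := by
      ext p
      constructor
      · rintro ⟨π, rfl⟩
        exact ⟨fun A => π.symm_apply_apply A, fun A => π.apply_symm_apply A⟩
      · rintro ⟨h1, h2⟩
        exact ⟨⟨p.1, p.2, fun A => h1 A, fun A => h2 A⟩, rfl⟩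
    rw [hr]
    have : {p : (CommNT → CommNT) × (CommNT → CommNT) |
        (∀ A, p.2 (p.1 A) = A) ∧ (∀ A, p.1 (p.2 A) = A)} =
        (⋂ A : CommNT, (fun p : (CommNT → CommNT) × (CommNT → CommNT) => p.2 (p.1 A)) ⁻¹' {A}) ∩
        (⋂ A : CommNT, (fun p : (CommNT → CommNT) × (CommNT → CommNT) => p.1 (p.2 A)) ⁻¹' {A}) := by
      ext p
      simp [Set.mem_iInter]
    rw [this]
    refine IsClosed.inter (isClosed_iInter fun A => ?_) (isClosed_iInter fun A => ?_)
    · exact IsClosed.preimage (cont_eval_comp A) (isClosed_discrete _)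
    · refine IsClosed.preimage ?_ (isClosed_discrete ({A} : Set CommNT))
      have : (fun p : (CommNT → CommNT) × (CommNT → CommNT) => p.1 (p.2 A)) =
          (fun q : (CommNT → CommNT) × (CommNT → CommNT) => q.2 (q.1 A)) ∘ Prod.swap := rfl
      rw [this]
      exact (cont_eval_comp A).comp continuous_swap

instance : PolishSpace (Equiv.Perm CommNT) := by
  haveI : PolishSpace ((CommNT → CommNT) × (CommNT → CommNT)) :=
    { toSecondCountableTopology := inferInstance, toIsCompletelyMetrizableSpace := inferInstance }
  exact isClosedEmbedding_iotaP.polishSpace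

instance : IsTopologicalGroup (Equiv.Perm CommNT) where
  continuous_mul := by
    apply continuous_induced_rng.2
    refine Continuous.prodMk ?_ ?_
    · apply continuous_pi
      intro A
      have : (fun p : Equiv.Perm CommNT × Equiv.Perm CommNT => (p.1 * p.2) A) =
          (fun q : (CommNT → CommNT) × (CommNT → CommNT) => q.2 (q.1 A)) ∘
            (fun p : Equiv.Perm CommNT × Equiv.Perm CommNT => (⇑p.2, ⇑p.1)) := rfl
      rw [this]
      exact (cont_eval_comp A).comp
        ((continuous_coePerm.comp continuous_snd).prodMk
          (continuous_coePerm.comp continuous_fst))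
    · apply continuous_pi
      intro A
      have : (fun p : Equiv.Perm CommNT × Equiv.Perm CommNT => (p.1 * p.2).symm A) =
          (fun q : (CommNT → CommNT) × (CommNT → CommNT) => q.2 (q.1 A)) ∘
            (fun p : Equiv.Perm CommNT × Equiv.Perm CommNT => (⇑p.1.symm, ⇑p.2.symm)) := rfl
      rw [this]
      exact (cont_eval_comp A).comp
        ((continuous_symmPerm.comp continuous_fst).prodMk
          (continuous_symmPerm.comp continuous_snd))
  continuous_inv := by
    apply continuous_induced_rng.2
    exact continuous_symmPerm.prodMk continuous_coePerm

end PermTop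

/-- `symZNPerm` as a group homomorphism. -/
def symZNHom : SymZN →* Equiv.Perm CommNT where
  toFun := symZNPerm
  map_one' := by
    ext A
    refine Subtype.ext ?_
    show ⇑((1 : SymZN) : Equiv.Perm ℤ) '' A.1 = A.1
    simp
  map_mul' σ τ := by
    ext A
    refine Subtype.ext ?_
    show ⇑((σ * τ : SymZN) : Equiv.Perm ℤ) '' A.1
      = ⇑(σ : Equiv.Perm ℤ) '' (⇑(τ : Equiv.Perm ℤ) '' A.1)
    rw [← Set.image_comp]
    rfl

instance : IsTopologicalGroup SymZN :=
  Topology.IsInducing.topologicalGroup symZNHom ⟨rfl⟩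

/-- Lattice-automorphism characterization set. -/
def latAut : Set (Equiv.Perm CommNT) :=
  {π | (∀ A B, π (cupC A B) = cupC (π A) (π B)) ∧ ∀ A B, π (capC A B) = capC (π A) (π B)}

lemma isClosed_latAut : IsClosed latAut := by
  have h1 : ∀ A B : CommNT, IsClosed {π : Equiv.Perm CommNT | π (cupC A B) = cupC (π A) (π B)} := by
    intro A B
    have hc : Continuous (fun π : Equiv.Perm CommNT =>
        ((π (cupC A B), π A, π B) : CommNT × CommNT × CommNT)) := by
      refine Continuous.prodMk ?_ (Continuous.prodMk ?_ ?_) <;>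
        exact (continuous_apply _).comp continuous_coePerm
    have : {π : Equiv.Perm CommNT | π (cupC A B) = cupC (π A) (π B)} =
        (fun π : Equiv.Perm CommNT => ((π (cupC A B), π A, π B) : CommNT × CommNT × CommNT)) ⁻¹'
          {t | t.1 = cupC t.2.1 t.2.2} := rfl
    rw [this]
    exact IsClosed.preimage hc (isClosed_discrete _)
  have h2 : ∀ A B : CommNT, IsClosed {π : Equiv.Perm CommNT | π (capC A B) = capC (π A) (π B)} := by
    intro A B
    have hc : Continuous (fun π : Equiv.Perm CommNT =>
        ((π (capC A B), π A, π B) : CommNT × CommNT × CommNT)) := by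
      refine Continuous.prodMk ?_ (Continuous.prodMk ?_ ?_) <;>
        exact (continuous_apply _).comp continuous_coePerm
    have : {π : Equiv.Perm CommNT | π (capC A B) = capC (π A) (π B)} =
        (fun π : Equiv.Perm CommNT => ((π (capC A B), π A, π B) : CommNT × CommNT × CommNT)) ⁻¹'
          {t | t.1 = capC t.2.1 t.2.2} := rfl
    rw [this]
    exact IsClosed.preimage hc (isClosed_discrete _)
  have : latAut = (⋂ A, ⋂ B, {π : Equiv.Perm CommNT | π (cupC A B) = cupC (π A) (π B)}) ∩
      (⋂ A, ⋂ B, {π : Equiv.Perm CommNT | π (capC A B) = capC (π A) (π B)}) := by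
    ext π
    simp only [latAut, Set.mem_inter_iff, Set.mem_iInter, Set.mem_setOf_eq]
  rw [this]
  exact IsClosed.inter (isClosed_iInter fun A => isClosed_iInter fun B => h1 A B)
    (isClosed_iInter fun A => isClosed_iInter fun B => h2 A B)

section Reconstruction

variable {ρ : Equiv.Perm CommNT}
  (hcup : ∀ A B, ρ (cupC A B) = cupC (ρ A) (ρ B))
  (hcap : ∀ A B, ρ (capC A B) = capC (ρ A) (ρ B))

include hcup in
lemma mono_of_cup {A B : CommNT} (h : A.1 ⊆ B.1) : (ρ A).1 ⊆ (ρ B).1 := by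
  have hAB : cupC A B = B := Subtype.ext (Set.union_eq_self_of_subset_left h)
  have := hcup A B
  rw [hAB] at this
  rw [this]
  exact Set.subset_union_left

include hcup hcap in
lemma exists_point : ∀ z : ℤ, ∃ w : ℤ, ∀ A : CommNT, z ∈ A.1 ↔ w ∈ (ρ A).1 := by
  intro z
  set M : Set ℤ := (ρ (nnD z)).1 with hM
  set M' : Set ℤ := (ρ (nnU z)).1 with hM'
  have hDU : (nnD z).1 ⊆ (nnU z).1 := fun x hx => Or.inl hx.1
  have hMM' : M ⊆ M' := mono_of_cup hcup hDU
  -- `M' \ M` is a singleton.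
  have hfin : (M' \ M).Finite := by
    refine (((ρ (nnU z)).2).union ((ρ (nnD z)).2)).subset ?_
    intro x hx
    by_cases hxN : x ∈ NN
    · exact Or.inr (Or.inr ⟨hxN, hx.2⟩)
    · exact Or.inl (Or.inl ⟨hx.1, hxN⟩)
  have hne : (M' \ M).Nonempty := by
    rcases Set.eq_empty_or_nonempty (M' \ M) with he | hne
    · exfalso
      have hM'M : M' = M :=
        Set.Subset.antisymm (fun x hx => by
          by_contra hxM
          exact Set.eq_empty_iff_forall_notMem.1 he x ⟨hx, hxM⟩) hMM'
      have : nnU z = nnD z := ρ.injective (Subtype.ext hM'M)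
      have hz : z ∈ (nnU z).1 := Or.inr rfl
      rw [this] at hz
      exact hz.2 rfl
    · exact hne
  have huniq : ∀ w₁ ∈ M' \ M, ∀ w₂ ∈ M' \ M, w₁ = w₂ := by
    intro w₁ hw₁ w₂ hw₂
    by_contra hww
    have hCcomm : (symmDiff (M ∪ {w₁}) NN).Finite := by
      refine (((ρ (nnD z)).2).union (Set.finite_singleton w₁)).subset ?_
      intro x hx
      simp only [Set.mem_symmDiff, Set.mem_union, Set.mem_singleton_iff] at hx ⊢
      tauto
    set C : CommNT := ⟨M ∪ {w₁}, hCcomm⟩ with hC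
    set B : CommNT := ρ.symm C with hB
    have hρB : ρ B = C := ρ.apply_symm_apply C
    -- `nnD z ⊆ B ⊆ nnU z` via monotonicity of `ρ.symm`, expressed through `ρ`.
    have hmono2 : ∀ {X Y : CommNT}, (ρ X).1 ⊆ (ρ Y).1 → X.1 ⊆ Y.1 := by
      intro X Y hXY
      have h1 : cupC (ρ X) (ρ Y) = ρ Y := Subtype.ext (Set.union_eq_self_of_subset_left hXY)
      have h2 : ρ (cupC X Y) = ρ Y := by rw [hcup]; exact h1
      have h3 : cupC X Y = Y := ρ.injective h2
      have := congrArg Subtype.val h3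
      rw [← this]
      exact Set.subset_union_left
    have hDB : (nnD z).1 ⊆ B.1 := by
      refine hmono2 ?_
      rw [hρB]
      exact fun x hx => Or.inl hx
    have hBU : B.1 ⊆ (nnU z).1 := by
      refine hmono2 ?_
      rw [hρB]
      rintro x (hx | hx)
      · exact hMM' hx
      · exact hx ▸ hw₁.1
    by_cases hzB : z ∈ B.1
    · have hBeq : B = nnU z := by
        refine Subtype.ext (Set.Subset.antisymm hBU ?_)
        rintro x (hx | hx)
        · by_cases hxz : x = z
          · exact hxz ▸ hzB
          · exact hDB ⟨hx, hxz⟩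
        · exact hx ▸ hzB
      have : C = ρ (nnU z) := by rw [← hρB, hBeq]
      have hw₂C : w₂ ∈ C.1 := by
        rw [this]; exact hw₂.1
      rcases hw₂C with h | h
      · exact hw₂.2 h
      · exact hww (Set.mem_singleton_iff.1 h).symm
    · have hBeq : B = nnD z := by
        refine Subtype.ext (Set.Subset.antisymm ?_ hDB)
        intro x hx
        rcases hBU hx with h | h
        · exact ⟨h, fun hxz => hzB (hxz ▸ hx)⟩
        · exact absurd (h ▸ hx) hzB
      have : C = ρ (nnD z) := by rw [← hρB, hBeq]
      have hw₁C : w₁ ∈ C.1 := Or.inr rfl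
      rw [this] at hw₁C
      exact hw₁.2 hw₁C
  obtain ⟨w, hw⟩ := hne
  refine ⟨w, ?_⟩
  -- the membership criterion
  have hMw : M ∪ {w} = M' := by
    apply Set.Subset.antisymm
    · rintro x (hx | hx)
      · exact hMM' hx
      · exact hx ▸ hw.1
    · intro x hx
      by_cases hxM : x ∈ M
      · exact Or.inl hxM
      · exact Or.inr (Set.mem_singleton_iff.2 (huniq x ⟨hx, hxM⟩ w hw))
  intro A
  have hsource : z ∈ A.1 ↔ cupC (capC A (nnU z)) (nnD z) = nnU z := by
    have hzD : z ∉ (nnD z).1 := fun h => h.2 rfl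
    have hDz : (nnD z).1 ∪ {z} = (nnU z).1 := by
      show NN \ {z} ∪ {z} = NN ∪ {z}
      exact Set.diff_union_self
    rw [show ∀ X Y : CommNT, X = Y ↔ X.1 = Y.1 from fun X Y => Subtype.ext_iff]
    show z ∈ A.1 ↔ (A.1 ∩ (nnU z).1) ∪ (nnD z).1 = (nnU z).1
    rw [← hDz]
    exact (cover_mem_iff hzD).symm
  have htarget : w ∈ (ρ A).1 ↔ cupC (capC (ρ A) (ρ (nnU z))) (ρ (nnD z)) = ρ (nnU z) := by
    rw [show ∀ X Y : CommNT, X = Y ↔ X.1 = Y.1 from fun X Y => Subtype.ext_iff]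
    show w ∈ (ρ A).1 ↔ ((ρ A).1 ∩ M') ∪ M = M'
    rw [← hMw]
    exact (cover_mem_iff hw.2).symm
  rw [hsource, htarget]
  constructor
  · intro h
    rw [← hcap, ← hcup, h]
  · intro h
    apply ρ.injective
    rw [hcup, hcap]
    exact h

end Reconstruction

lemma range_symZNPerm_eq : Set.range symZNPerm = latAut := by
  apply Set.Subset.antisymm
  · rintro _ ⟨σ, rfl⟩
    constructor
    · intro A B
      refine Subtype.ext ?_
      show ⇑(σ : Equiv.Perm ℤ) '' (A.1 ∪ B.1)
        = (⇑(σ : Equiv.Perm ℤ) '' A.1) ∪ (⇑(σ : Equiv.Perm ℤ) '' B.1)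
      exact Set.image_union _ _ _
    · intro A B
      refine Subtype.ext ?_
      show ⇑(σ : Equiv.Perm ℤ) '' (A.1 ∩ B.1)
        = (⇑(σ : Equiv.Perm ℤ) '' A.1) ∩ (⇑(σ : Equiv.Perm ℤ) '' B.1)
      exact Set.image_inter (Equiv.injective _)
  · rintro π ⟨hcup, hcap⟩
    -- `π.symm` also preserves unions and intersections
    have hcup' : ∀ A B, π.symm (cupC A B) = cupC (π.symm A) (π.symm B) := by
      intro A B
      apply π.injective
      rw [π.apply_symm_apply, hcup, π.apply_symm_apply, π.apply_symm_apply]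
    have hcap' : ∀ A B, π.symm (capC A B) = capC (π.symm A) (π.symm B) := by
      intro A B
      apply π.injective
      rw [π.apply_symm_apply, hcap, π.apply_symm_apply, π.apply_symm_apply]
    choose σf hσ using exists_point hcup hcap
    choose τf hτ using exists_point hcup' hcap'
    have hleft : ∀ z, τf (σf z) = z := by
      intro z
      refine (eq_of_forall_memC fun B => ?_).symm
      rw [hσ z B, hτ (σf z) (π B), π.symm_apply_apply]
    have hright : ∀ w, σf (τf w) = w := by
      intro w
      refine (eq_of_forall_memC fun B => ?_).symm
      rw [hτ w B, hσ (τf w) (π.symm B), π.apply_symm_apply]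
    set e : Equiv.Perm ℤ := ⟨σf, τf, hleft, hright⟩ with he
    have himg : ∀ A : CommNT, ⇑e '' A.1 = (π A).1 := by
      intro A
      ext x
      constructor
      · rintro ⟨z, hz, rfl⟩
        exact (hσ z A).1 hz
      · intro hx
        refine ⟨τf x, ?_, hright x⟩
        have := hσ (τf x) A
        rw [hright x] at this
        exact this.2 hx
    have hmem : e ∈ SymZN := by
      show (symmDiff (⇑e '' NN) NN).Finite
      have : ⇑e '' NN = (π nnI).1 := himg nnI
      rw [this]
      exact (π nnI).2
    refine ⟨⟨e, hmem⟩, ?_⟩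
    ext A
    exact Subtype.ext (himg A)

end Aux

/- ## Statement 9 -/

/-- **Proposition.** `Sym(ℤ,ℕ)` with its permutation-group topology on `Comm(ℕ)` is a
Polish group; more precisely, its image under the faithful action on `Comm(ℕ)` is closed
in the Polish group of all permutations of the countable set `Comm(ℕ)` with the topology
of pointwise convergence. -/
theorem symZN_polish_group :
    @IsClosed _ permCommTop (Set.range symZNPerm) ∧
      @PolishSpace SymZN symZNTop ∧
      @IsTopologicalGroup SymZN symZNTop _ := by
  have hclosed : IsClosed (Set.range symZNPerm) := by
    rw [range_symZNPerm_eq]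
    exact isClosed_latAut
  refine ⟨hclosed, ?_, inferInstance⟩
  have hinj : Function.Injective symZNPerm := by
    intro σ τ h
    have himg : ∀ A : CommNT, ⇑(σ : Equiv.Perm ℤ) '' A.1 = ⇑(τ : Equiv.Perm ℤ) '' A.1 := by
      intro A
      have := congrArg (fun π : Equiv.Perm CommNT => (π A).1) h
      exact this
    refine Subtype.ext (Equiv.ext fun z => ?_)
    have hU := himg (nnU z)
    have hD := himg (nnD z)
    have hmemU : (σ : Equiv.Perm ℤ) z ∈ ⇑(τ : Equiv.Perm ℤ) '' (nnU z).1 := by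
      rw [← hU]; exact ⟨z, Or.inr rfl, rfl⟩
    have hmemD : (σ : Equiv.Perm ℤ) z ∉ ⇑(τ : Equiv.Perm ℤ) '' (nnD z).1 := by
      rw [← hD]
      rintro ⟨y, hy, hyz⟩
      have : y = z := (σ : Equiv.Perm ℤ).injective hyz
      exact hy.2 this
    rcases hmemU with ⟨y, hy, hyz⟩
    rcases hy with hy | hy
    · by_cases hyzz : y = z
      · rw [← hyz, hyzz]
      · exact absurd ⟨y, ⟨hy, hyzz⟩, hyz⟩ hmemD
    · rw [← hyz, hy]
  have hemb : Topology.IsClosedEmbedding symZNPerm := ⟨⟨⟨rfl⟩, hinj⟩, hclosed⟩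
  exact hemb.polishSpace


end CfgPaper
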